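/- arXiv:1902.00989 — 3 statements merged into one kernel-verified Lean document; each statement's English description precedes it below -/
import Mathlib

section
/- Let (X,d) be a finite nonempty metric space of diameter at most one, and let ε > 0. Then there exists a point x₀ ∈ X and a radius r₀ > 0 such that: (1) |X ∩ B(x₀,r₀)| ≥ (1/2)|X|^{1-ε}, and (2) for every x ∈ X and every r ≥ 1/|X|, |B(x,r) ∩ X ∩ B(x₀,r₀)| ≤ 2(r/r₀)^ε |X ∩ B(x₀,r₀)|. -/
open Metric Set

/-- Lemma 2.1 (largeHomogeneousPiece): in a finite nonempty metric space of diameter at most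
one, there is a point `x₀` and radius `r₀ > 0` so that the ball `B(x₀,r₀)` captures at least
`|X|^(1-ε)/2` points, and no ball `B(x,r)` with `r ≥ 1/|X|` concentrates more than
`2 (r/r₀)^ε |X ∩ B(x₀,r₀)|` points of `B(x₀,r₀)`. -/
theorem large_homogeneous_piece
    (X : Type*) [MetricSpace X] [Fintype X] [Nonempty X]
    (hdiam : Metric.diam (Set.univ : Set X) ≤ 1)
    (ε : ℝ) (hε : 0 < ε) :
    ∃ (x₀ : X) (r₀ : ℝ), 0 < r₀ ∧
      ((Metric.closedBall x₀ r₀).ncard : ℝ) ≥ (1/2) * (Fintype.card X : ℝ) ^ ((1:ℝ) - ε) ∧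
      ∀ (x : X) (r : ℝ), 1 / (Fintype.card X : ℝ) ≤ r →
        ((Metric.closedBall x r ∩ Metric.closedBall x₀ r₀).ncard : ℝ) ≤
          2 * (r / r₀) ^ ε * ((Metric.closedBall x₀ r₀).ncard : ℝ) := by
  classical
  have hN : 0 < Fintype.card X := Fintype.card_pos
  have hNpos : (0:ℝ) < (Fintype.card X : ℝ) := by exact_mod_cast hN
  have hN1 : (1:ℝ) ≤ (Fintype.card X : ℝ) := by exact_mod_cast hN
  have hinv : (0:ℝ) < 1 / (Fintype.card X : ℝ) := by positivity
  have hinv1 : 1 / (Fintype.card X : ℝ) ≤ 1 := by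
    rw [div_le_one hNpos]; exact hN1
  set D : Finset ℝ := insert (1/(Fintype.card X : ℝ))
    ((Finset.univ.image (fun p : X × X => dist p.1 p.2)).filter
      (fun r => 1/(Fintype.card X : ℝ) ≤ r)) with hD
  have hDlb : ∀ r ∈ D, 1/(Fintype.card X : ℝ) ≤ r := by
    intro r hr
    rcases Finset.mem_insert.1 hr with h | h
    · exact h.ge
    · exact (Finset.mem_filter.1 h).2
  have hDub : ∀ r ∈ D, r ≤ 1 := by
    intro r hr
    rcases Finset.mem_insert.1 hr with h | h
    · exact h ▸ hinv1
    · obtain ⟨p, -, hp⟩ := Finset.mem_image.1 (Finset.mem_filter.1 h).1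
      rw [← hp]
      exact le_trans (Metric.dist_le_diam_of_mem Set.finite_univ.isBounded
        (Set.mem_univ _) (Set.mem_univ _)) hdiam
  -- helper: for any r ≥ 1/N, there is r' ∈ D with r' ≤ r and B(x,r) ⊆ B(x,r')
  have helper : ∀ (x : X) (r : ℝ), 1/(Fintype.card X : ℝ) ≤ r →
      ∃ r' ∈ D, r' ≤ r ∧ Metric.closedBall x r ⊆ Metric.closedBall x r' := by
    intro x r hr
    set F := D.filter (· ≤ r) with hF
    have hmem1 : (1/(Fintype.card X : ℝ)) ∈ F := by
      simp only [hF, Finset.mem_filter]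
      exact ⟨Finset.mem_insert_self _ _, hr⟩
    have hFne : F.Nonempty := ⟨_, hmem1⟩
    refine ⟨F.max' hFne, (Finset.mem_filter.1 (F.max'_mem hFne)).1,
      (Finset.mem_filter.1 (F.max'_mem hFne)).2, ?_⟩
    intro y hy
    rw [Metric.mem_closedBall] at hy ⊢
    by_cases hcase : dist y x ≤ 1/(Fintype.card X : ℝ)
    · exact le_trans hcase (Finset.le_max' F _ hmem1)
    · push_neg at hcase
      have hmemD : dist y x ∈ D := by
        apply Finset.mem_insert_of_mem
        rw [Finset.mem_filter]
        exact ⟨Finset.mem_image.2 ⟨(y, x), Finset.mem_univ _, rfl⟩, hcase.le⟩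
      exact Finset.le_max' F _ (Finset.mem_filter.2 ⟨hmemD, hy⟩)
  -- maximize g over univ ×ˢ D
  set g : X × ℝ → ℝ := fun p => ((Metric.closedBall p.1 p.2).ncard : ℝ) * p.2 ^ (-ε) with hg
  obtain ⟨p₀, hp₀mem, hp₀max⟩ := Finset.exists_max_image
    ((Finset.univ : Finset X) ×ˢ D) g
    ⟨(Classical.arbitrary X, 1/(Fintype.card X : ℝ)),
      Finset.mem_product.2 ⟨Finset.mem_univ _, Finset.mem_insert_self _ _⟩⟩
  obtain ⟨x₀, r₀⟩ := p₀
  have hr₀D : r₀ ∈ D := (Finset.mem_product.1 hp₀mem).2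
  have hr₀lb : 1/(Fintype.card X : ℝ) ≤ r₀ := hDlb _ hr₀D
  have hr₀pos : 0 < r₀ := lt_of_lt_of_le hinv hr₀lb
  set M : ℝ := g (x₀, r₀) with hM
  -- core bound: for any x, r ≥ 1/N, |B(x,r)| ≤ M * r^ε
  have core : ∀ (x : X) (r : ℝ), 1/(Fintype.card X : ℝ) ≤ r →
      ((Metric.closedBall x r).ncard : ℝ) ≤ M * r ^ ε := by
    intro x r hr
    obtain ⟨r', hr'D, hr'le, hsub⟩ := helper x r hr
    have hr'pos : 0 < r' := lt_of_lt_of_le hinv (hDlb _ hr'D)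
    have hrpos : 0 < r := lt_of_lt_of_le hinv hr
    have h1 : ((Metric.closedBall x r).ncard : ℝ) ≤ ((Metric.closedBall x r').ncard : ℝ) := by
      exact_mod_cast Nat.cast_le.2 (Set.ncard_le_ncard hsub (Set.toFinite _))
    have h2 : g (x, r') ≤ M := hp₀max _ (Finset.mem_product.2 ⟨Finset.mem_univ _, hr'D⟩)
    have hMnonneg : 0 ≤ M := le_trans (by positivity) h2
    have h3 : ((Metric.closedBall x r').ncard : ℝ) = g (x, r') * r' ^ ε := by
      rw [hg]
      simp only []
      rw [mul_assoc, ← Real.rpow_add hr'pos]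
      simp
    calc ((Metric.closedBall x r).ncard : ℝ) ≤ g (x, r') * r' ^ ε := h3 ▸ h1
      _ ≤ M * r' ^ ε := by
          apply mul_le_mul_of_nonneg_right h2 (Real.rpow_nonneg hr'pos.le _)
      _ ≤ M * r ^ ε := by
          apply mul_le_mul_of_nonneg_left _ hMnonneg
          exact Real.rpow_le_rpow hr'pos.le hr'le hε.le
  -- M ≥ N
  have hball1 : ∀ x : X, Metric.closedBall x 1 = Set.univ := by
    intro x
    apply Set.eq_univ_of_forall
    intro y
    rw [Metric.mem_closedBall]
    exact le_trans (Metric.dist_le_diam_of_mem Set.finite_univ.isBounded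
      (Set.mem_univ _) (Set.mem_univ _)) hdiam
  have hMN : (Fintype.card X : ℝ) ≤ M := by
    obtain x := Classical.arbitrary X
    have := core x 1 hinv1
    rw [hball1 x, Set.ncard_univ, Nat.card_eq_fintype_card, Real.one_rpow, mul_one] at this
    exact this
  have hMeq : ((Metric.closedBall x₀ r₀).ncard : ℝ) = M * r₀ ^ ε := by
    rw [hM, hg]
    simp only []
    rw [mul_assoc, ← Real.rpow_add hr₀pos]
    simp
  refine ⟨x₀, r₀, hr₀pos, ?_, ?_⟩
  · -- size lower bound
    have h1 : (1/(Fintype.card X : ℝ)) ^ ε ≤ r₀ ^ ε :=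
      Real.rpow_le_rpow hinv.le hr₀lb hε.le
    have h2 : M * (1/(Fintype.card X : ℝ)) ^ ε ≤ M * r₀ ^ ε :=
      mul_le_mul_of_nonneg_left h1 (le_trans hNpos.le hMN)
    have h3 : (Fintype.card X : ℝ) * (1/(Fintype.card X : ℝ)) ^ ε
        ≤ M * (1/(Fintype.card X : ℝ)) ^ ε :=
      mul_le_mul_of_nonneg_right hMN (Real.rpow_nonneg hinv.le _)
    have h4 : (Fintype.card X : ℝ) * (1/(Fintype.card X : ℝ)) ^ ε
        = (Fintype.card X : ℝ) ^ ((1:ℝ) - ε) := by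
      rw [one_div, Real.inv_rpow hNpos.le, Real.rpow_sub hNpos, Real.rpow_one,
        div_eq_mul_inv]
    rw [ge_iff_le, hMeq]
    calc (1/2 : ℝ) * (Fintype.card X : ℝ) ^ ((1:ℝ) - ε)
        ≤ (Fintype.card X : ℝ) ^ ((1:ℝ) - ε) := by
          nlinarith [Real.rpow_nonneg hNpos.le ((1:ℝ) - ε)]
      _ = (Fintype.card X : ℝ) * (1/(Fintype.card X : ℝ)) ^ ε := h4.symm
      _ ≤ M * (1/(Fintype.card X : ℝ)) ^ ε := h3
      _ ≤ M * r₀ ^ ε := h2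
  · -- doubling-type bound
    intro x r hr
    have hrpos : 0 < r := lt_of_lt_of_le hinv hr
    have hdivpow : (r / r₀) ^ ε = r ^ ε / r₀ ^ ε := Real.div_rpow hrpos.le hr₀pos.le ε
    have hr₀e : (0:ℝ) < r₀ ^ ε := Real.rpow_pos_of_pos hr₀pos ε
    by_cases hcase : r ≤ r₀
    · have h1 : ((Metric.closedBall x r ∩ Metric.closedBall x₀ r₀).ncard : ℝ)
          ≤ ((Metric.closedBall x r).ncard : ℝ) := by
        exact_mod_cast Nat.cast_le.2
          (Set.ncard_le_ncard Set.inter_subset_left (Set.toFinite _))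
      have h2 := core x r hr
      have hMval : M = ((Metric.closedBall x₀ r₀).ncard : ℝ) / r₀ ^ ε := by
        rw [hMeq]; field_simp
      calc ((Metric.closedBall x r ∩ Metric.closedBall x₀ r₀).ncard : ℝ)
          ≤ M * r ^ ε := le_trans h1 h2
        _ = (r / r₀) ^ ε * ((Metric.closedBall x₀ r₀).ncard : ℝ) := by
            rw [hMval, hdivpow]; field_simp
        _ ≤ 2 * (r / r₀) ^ ε * ((Metric.closedBall x₀ r₀).ncard : ℝ) := by
            have hnn : (0:ℝ) ≤ (r / r₀) ^ ε * ((Metric.closedBall x₀ r₀).ncard : ℝ) := by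
              positivity
            nlinarith
    · push_neg at hcase
      have h1 : ((Metric.closedBall x r ∩ Metric.closedBall x₀ r₀).ncard : ℝ)
          ≤ ((Metric.closedBall x₀ r₀).ncard : ℝ) := by
        exact_mod_cast Nat.cast_le.2
          (Set.ncard_le_ncard Set.inter_subset_right (Set.toFinite _))
      have h2 : (1:ℝ) ≤ (r / r₀) ^ ε := by
        apply Real.one_le_rpow ?_ hε.le
        rw [le_div_iff₀ hr₀pos]; linarith
      have hnn : (0:ℝ) ≤ ((Metric.closedBall x₀ r₀).ncard : ℝ) := by positivity
      nlinarith
end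

section
/- Let (X₁,d₁),…,(Xₙ,dₙ) be finite nonempty metric spaces of diameter at most one, each of cardinality at most N (with N ≥ 2). Fix ε > 0. Then there exist a radius r₀ > 0, a set of indices I ⊆ {1,…,n} with |I| ≥ c·n/(log N)² for an absolute constant c > 0, and points xᵢ ∈ Xᵢ for i ∈ I, such that for every i ∈ I: |Xᵢ ∩ B(xᵢ,r₀)| ≥ (1/4)|Xᵢ|^{1-ε}, and for every x ∈ Xᵢ and every r ≥ 1/|Xᵢ|, |B(x,r) ∩ Xᵢ ∩ B(xᵢ,r₀)| ≤ 8(r/r₀)^ε |Xᵢ ∩ B(xᵢ,r₀)|. -/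
/-!
For a single space, maximise the density `|B(x, ρ)| / ρ ^ ε` over centres `x` and dyadic radii
`1 / |X| ≤ ρ ≤ 1`. Comparing the maximiser `B(x₀, r₀)` with the whole space (the ball of radius 1)
gives `|B(x₀, r₀)| ≥ |X| ^ (1 - ε)`; comparing it with a dyadic ball `B(y, ρ) ⊇ B(y, r)` with
`r ≤ ρ < 2r` gives `|B(y, r)| ≤ (2r / r₀) ^ ε |B(x₀, r₀)|`. There are only `log₂ N + 1` dyadic
radii, so one of them is chosen for at least `n / (log₂ N + 1)` of the spaces. For `ε ≥ 1` the
radius `1 / N` works everywhere: then `|X| ^ (1 - ε) ≤ 1`, and the second estimate is only asked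
for `r ≥ 1 / |X| ≥ r₀`, where it is trivial.
-/

open Metric Set

section TwoEndsBall

variable {X : Type*} [MetricSpace X]

lemma closedBall_eq_univ_of_diam_le [BoundedSpace X] {r : ℝ}
    (hdiam : diam (univ : Set X) ≤ r) (x : X) : closedBall x r = univ :=
  eq_univ_of_forall fun y =>
    (dist_le_diam_of_mem (Bornology.IsBounded.all univ) (mem_univ y) (mem_univ x)).trans hdiam

lemma le_rpow_div_mul_of_div_rpow_le {a b ρ ρ₀ ε : ℝ} (hρ : 0 < ρ) (hρ₀ : 0 < ρ₀)
    (h : a / ρ ^ ε ≤ b / ρ₀ ^ ε) : a ≤ (ρ / ρ₀) ^ ε * b := by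
  have hρε : 0 < ρ ^ ε := Real.rpow_pos_of_pos hρ ε
  calc a = ρ ^ ε * (a / ρ ^ ε) := by field_simp
    _ ≤ ρ ^ ε * (b / ρ₀ ^ ε) := mul_le_mul_of_nonneg_left h hρε.le
    _ = (ρ / ρ₀) ^ ε * b := by rw [Real.div_rpow hρ.le hρ₀.le]; ring

lemma ncard_inter_closedBall_le_of_le [Finite X] (x y : X) {r r₀ ε : ℝ} (hr₀ : 0 < r₀)
    (hr : r₀ ≤ r) (hε : 0 ≤ ε) :
    ((closedBall y r ∩ closedBall x r₀).ncard : ℝ) ≤ (r / r₀) ^ ε * (closedBall x r₀).ncard := by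
  have hsub : ((closedBall y r ∩ closedBall x r₀).ncard : ℝ) ≤ (closedBall x r₀).ncard :=
    mod_cast ncard_le_ncard inter_subset_right (toFinite _)
  have hone : 1 ≤ (r / r₀) ^ ε := Real.one_le_rpow ((one_le_div hr₀).2 hr) hε
  nlinarith [(Nat.cast_nonneg _ : (0 : ℝ) ≤ (closedBall x r₀).ncard)]

variable [Fintype X]

def IsTwoEndsBall (ε : ℝ) (x : X) (r₀ : ℝ) : Prop :=
  ((closedBall x r₀).ncard : ℝ) ≥ (1 / 4) * (Fintype.card X : ℝ) ^ ((1 : ℝ) - ε) ∧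
    ∀ (y : X) (r : ℝ), 1 / (Fintype.card X : ℝ) ≤ r →
      ((closedBall y r ∩ closedBall x r₀).ncard : ℝ) ≤
        8 * (r / r₀) ^ ε * ((closedBall x r₀).ncard : ℝ)

/-- `B(x, r₀)` has at least the density `|B(y, ρ)| / ρ ^ ε` of every ball of dyadic radius
`ρ ≥ 1 / |X|`. -/
def DominatesDyadicBalls (ε : ℝ) (x : X) (r₀ : ℝ) : Prop :=
  ∀ j ≤ Nat.log 2 (Fintype.card X), ∀ y : X,
    ((closedBall y ((2 : ℝ) ^ j)⁻¹).ncard : ℝ) ≤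
      (((2 : ℝ) ^ j)⁻¹ / r₀) ^ ε * (closedBall x r₀).ncard

variable {ε r₀ : ℝ} {x : X}

lemma DominatesDyadicBalls.rpow_one_sub_le_ncard [Nonempty X] (h : DominatesDyadicBalls ε x r₀)
    (hdiam : diam (univ : Set X) ≤ 1) (hr₀ : 1 / (Fintype.card X : ℝ) ≤ r₀) (hε : 0 ≤ ε) :
    (Fintype.card X : ℝ) ^ (1 - ε) ≤ (closedBall x r₀).ncard := by
  have hM : (0 : ℝ) < Fintype.card X := mod_cast Fintype.card_pos
  have hr₀pos : 0 < r₀ := (one_div_pos.2 hM).trans_le hr₀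
  have hMε : 0 < (Fintype.card X : ℝ) ^ ε := Real.rpow_pos_of_pos hM ε
  have hunit : (Fintype.card X : ℝ) ≤ (1 / r₀) ^ ε * (closedBall x r₀).ncard := by
    simpa [closedBall_eq_univ_of_diam_le hdiam] using h 0 (Nat.zero_le _) x
  have hscale : (1 / r₀) ^ ε ≤ (Fintype.card X : ℝ) ^ ε :=
    Real.rpow_le_rpow (by positivity) ((one_div_le hM hr₀pos).1 hr₀) hε
  rw [Real.rpow_sub hM, Real.rpow_one, div_le_iff₀ hMε]
  nlinarith [(Nat.cast_nonneg _ : (0 : ℝ) ≤ (closedBall x r₀).ncard)]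

lemma DominatesDyadicBalls.ncard_inter_le (h : DominatesDyadicBalls ε x r₀) (hr₀ : 0 < r₀)
    (hr₀1 : r₀ ≤ 1) (hε : 0 ≤ ε) (hε1 : ε ≤ 1) (y : X) {r : ℝ}
    (hr : 1 / (Fintype.card X : ℝ) ≤ r) :
    ((closedBall y r ∩ closedBall x r₀).ncard : ℝ) ≤
      2 * (r / r₀) ^ ε * (closedBall x r₀).ncard := by
  rcases le_or_gt r₀ r with hle | hlt
  · calc _ ≤ (r / r₀) ^ ε * (closedBall x r₀).ncard :=
          ncard_inter_closedBall_le_of_le x y hr₀ hle hε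
      _ ≤ 2 * (r / r₀) ^ ε * (closedBall x r₀).ncard := by
          have : 0 ≤ (r / r₀) ^ ε := Real.rpow_nonneg (div_nonneg (hr₀.le.trans hle) hr₀.le) ε
          nlinarith
  have hM : (0 : ℝ) < Fintype.card X := mod_cast Fintype.card_pos_iff.2 ⟨y⟩
  have hrpos : 0 < r := (one_div_pos.2 hM).trans_le hr
  obtain ⟨j, hj, hj'⟩ :=
    exists_nat_pow_near (one_le_one_div hrpos (hlt.le.trans hr₀1)) (one_lt_two (α := ℝ))
  have hrs : r ≤ ((2 : ℝ) ^ j)⁻¹ := by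
    rw [le_inv_comm₀ hrpos (by positivity), ← one_div]; exact hj
  have hs2r : ((2 : ℝ) ^ j)⁻¹ ≤ 2 * r := by
    rw [inv_le_comm₀ (by positivity) (by positivity), mul_inv, ← one_div r]
    rw [pow_succ] at hj'
    linarith
  have hjM : j ≤ Nat.log 2 (Fintype.card X) := by
    refine Nat.le_log_of_pow_le one_lt_two ?_
    exact_mod_cast hj.trans ((one_div_le hM hrpos).1 hr)
  have h2ε : (2 : ℝ) ^ ε ≤ 2 := by
    simpa using Real.rpow_le_rpow_of_exponent_le one_le_two hε1
  calc ((closedBall y r ∩ closedBall x r₀).ncard : ℝ)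
      _ ≤ (closedBall y ((2 : ℝ) ^ j)⁻¹).ncard := Nat.cast_le.2 <| ncard_le_ncard
          (inter_subset_left.trans (closedBall_subset_closedBall hrs)) (toFinite _)
      _ ≤ (((2 : ℝ) ^ j)⁻¹ / r₀) ^ ε * (closedBall x r₀).ncard := h j hjM y
      _ ≤ (2 * r / r₀) ^ ε * (closedBall x r₀).ncard := by gcongr
      _ = 2 ^ ε * (r / r₀) ^ ε * (closedBall x r₀).ncard := by
          rw [mul_div_assoc, Real.mul_rpow zero_le_two (by positivity)]
      _ ≤ 2 * (r / r₀) ^ ε * (closedBall x r₀).ncard := by gcongr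

theorem exists_isTwoEndsBall_dyadic [Nonempty X] (hdiam : diam (univ : Set X) ≤ 1)
    (hε : 0 ≤ ε) (hε1 : ε ≤ 1) :
    ∃ j ≤ Nat.log 2 (Fintype.card X), ∃ x : X, IsTwoEndsBall ε x ((2 : ℝ) ^ j)⁻¹ := by
  obtain ⟨⟨j, x⟩, hmem, hmax⟩ := Finset.exists_max_image
    (Finset.range (Nat.log 2 (Fintype.card X) + 1) ×ˢ Finset.univ)
    (fun p : ℕ × X => ((closedBall p.2 ((2 : ℝ) ^ p.1)⁻¹).ncard : ℝ) / ((2 : ℝ) ^ p.1)⁻¹ ^ ε)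
    ⟨(0, Classical.arbitrary X), by simp⟩
  have hj : j ≤ Nat.log 2 (Fintype.card X) := by simpa [Nat.lt_succ_iff] using hmem
  have hdom : DominatesDyadicBalls ε x ((2 : ℝ) ^ j)⁻¹ := fun j' hj' y =>
    le_rpow_div_mul_of_div_rpow_le (by positivity) (by positivity)
      (hmax (j', y) (by simpa [Nat.lt_succ_iff] using hj'))
  have hr₀ : 1 / (Fintype.card X : ℝ) ≤ ((2 : ℝ) ^ j)⁻¹ := by
    rw [one_div]
    gcongr
    exact_mod_cast (Nat.pow_le_pow_right two_pos hj).trans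
      (Nat.pow_log_le_self 2 Fintype.card_ne_zero)
  have hr₀1 : ((2 : ℝ) ^ j)⁻¹ ≤ 1 := inv_le_one_of_one_le₀ (one_le_pow₀ one_le_two)
  refine ⟨j, hj, x, ?_, fun y r hr => ?_⟩
  · have hlower := hdom.rpow_one_sub_le_ncard hdiam hr₀ hε
    have : (0 : ℝ) ≤ (Fintype.card X : ℝ) ^ (1 - ε) := by positivity
    linarith
  · calc ((closedBall y r ∩ closedBall x ((2 : ℝ) ^ j)⁻¹).ncard : ℝ)
        _ ≤ 2 * (r / ((2 : ℝ) ^ j)⁻¹) ^ ε * (closedBall x ((2 : ℝ) ^ j)⁻¹).ncard :=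
          hdom.ncard_inter_le (by positivity) hr₀1 hε hε1 y hr
        _ ≤ 8 * (r / ((2 : ℝ) ^ j)⁻¹) ^ ε * (closedBall x ((2 : ℝ) ^ j)⁻¹).ncard := by
          have hrpos : 0 < r := lt_of_lt_of_le (by positivity) hr
          gcongr
          norm_num

lemma isTwoEndsBall_of_one_le (hε : 1 ≤ ε) (x : X) (hr₀ : 0 < r₀)
    (hr₀M : r₀ ≤ 1 / (Fintype.card X : ℝ)) : IsTwoEndsBall ε x r₀ := by
  have hM : (1 : ℝ) ≤ Fintype.card X := mod_cast Fintype.card_pos_iff.2 ⟨x⟩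
  have hball : (1 : ℝ) ≤ (closedBall x r₀).ncard :=
    mod_cast (ncard_pos (toFinite _)).2 ⟨x, mem_closedBall_self hr₀.le⟩
  refine ⟨?_, fun y r hr => ?_⟩
  · have : (Fintype.card X : ℝ) ^ (1 - ε) ≤ 1 :=
      Real.rpow_le_one_of_one_le_of_nonpos hM (by linarith)
    linarith
  · have hrr₀ : r₀ ≤ r := hr₀M.trans hr
    have hle := ncard_inter_closedBall_le_of_le x y hr₀ hrr₀ (by linarith : 0 ≤ ε)
    have : 0 ≤ (r / r₀) ^ ε * (closedBall x r₀).ncard := by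
      have := hr₀.trans_le hrr₀
      positivity
    linarith

end TwoEndsBall

lemma log_two_sq_div_two_mul_div_log_sq_le {N : ℕ} (hN : 2 ≤ N) {m : ℝ} (hm : 0 ≤ m) :
    Real.log 2 ^ 2 / 2 * m / Real.log N ^ 2 ≤ m / (Nat.log 2 N + 1) := by
  have hlog2 : 0 < Real.log 2 := Real.log_pos one_lt_two
  have hL : 1 ≤ Real.logb 2 N :=
    (one_le_div hlog2).2 (Real.log_le_log two_pos (mod_cast hN))
  have hK : (Nat.log 2 N : ℝ) ≤ Real.logb 2 N := by exact_mod_cast Real.natLog_le_logb N 2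
  have hlogN : Real.log N = Real.logb 2 N * Real.log 2 := by
    rw [Real.logb, div_mul_cancel₀ _ hlog2.ne']
  rw [hlogN, div_le_div_iff₀ (by positivity) (by positivity)]
  have : (Nat.log 2 N + 1 : ℝ) ≤ 2 * Real.logb 2 N ^ 2 := by nlinarith
  calc Real.log 2 ^ 2 / 2 * m * (Nat.log 2 N + 1)
      _ ≤ Real.log 2 ^ 2 / 2 * m * (2 * Real.logb 2 N ^ 2) := by gcongr
      _ = m * (Real.logb 2 N * Real.log 2) ^ 2 := by ring

/-- Lemma 2.2 (twoEndsBuildingBlock): given finite nonempty metric spaces `X₁,…,Xₙ` of diameter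
at most one and cardinality at most `N`, there is a single radius `r₀`, a set of indices `I`
with `|I| ≳ n / (log N)²`, and points `xᵢ ∈ Xᵢ` so that each ball `B(xᵢ,r₀)` captures at least
`|Xᵢ|^(1-ε)/4` points and satisfies the non-concentration estimate. -/
theorem two_ends_building_block :
    ∃ c : ℝ, 0 < c ∧
      ∀ (n N : ℕ) (_ : 2 ≤ N) (X : Fin n → Type*)
        (_ : ∀ i, MetricSpace (X i)) (_ : ∀ i, Fintype (X i)) (_ : ∀ i, Nonempty (X i))
        (_ : ∀ i, Metric.diam (Set.univ : Set (X i)) ≤ 1)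
        (_ : ∀ i, Fintype.card (X i) ≤ N)
        (ε : ℝ) (_ : 0 < ε),
        ∃ (r₀ : ℝ) (I : Finset (Fin n)) (x : ∀ i, X i),
          0 < r₀ ∧
          (I.card : ℝ) ≥ c * n / (Real.log N) ^ 2 ∧
          (∀ i ∈ I,
            ((Metric.closedBall (x i) r₀).ncard : ℝ) ≥
              (1/4) * (Fintype.card (X i) : ℝ) ^ ((1:ℝ) - ε)) ∧
          (∀ i ∈ I, ∀ (y : X i) (r : ℝ), 1 / (Fintype.card (X i) : ℝ) ≤ r →
            ((Metric.closedBall y r ∩ Metric.closedBall (x i) r₀).ncard : ℝ) ≤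
              8 * (r / r₀) ^ ε * ((Metric.closedBall (x i) r₀).ncard : ℝ)) := by
  refine ⟨Real.log 2 ^ 2 / 2, by positivity, ?_⟩
  intro n N hN X _ _ _ hdiam hcard ε hε
  have hcount := log_two_sq_div_two_mul_div_log_sq_le hN (Nat.cast_nonneg (α := ℝ) n)
  rcases le_total ε 1 with hε1 | hε1
  · choose j hj x hx using fun i => exists_isTwoEndsBall_dyadic (hdiam i) hε.le hε1
    obtain ⟨j₀, -, hfiber⟩ := Finset.exists_le_card_fiber_of_nsmul_le_card_of_maps_to
      (s := Finset.univ) (t := Finset.range (Nat.log 2 N + 1)) (b := (n : ℝ) / (Nat.log 2 N + 1))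
      (fun i _ => Finset.mem_range_succ_iff.2 ((hj i).trans (Nat.log_mono_right (hcard i))))
      ⟨0, by simp⟩
      (by simp [nsmul_eq_mul, mul_div_cancel₀ _ (Nat.cast_add_one_ne_zero (R := ℝ) _)])
    refine ⟨((2 : ℝ) ^ j₀)⁻¹, Finset.univ.filter (j · = j₀), x, by positivity, hcount.trans hfiber,
      fun i hi => ?_, fun i hi => ?_⟩
    all_goals obtain rfl := (Finset.mem_filter.1 hi).2
    exacts [(hx i).1, (hx i).2]
  · have hball i : IsTwoEndsBall ε (Classical.arbitrary (X i)) (1 / N) :=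
      isTwoEndsBall_of_one_le hε1 _ (by positivity) <| one_div_le_one_div_of_le
        (mod_cast Fintype.card_pos) (mod_cast hcard i)
    refine ⟨1 / N, Finset.univ, fun i => Classical.arbitrary _, by positivity, ?_,
      fun i _ => (hball i).1, fun i _ => (hball i).2⟩
    calc _ ≤ (n : ℝ) / (Nat.log 2 N + 1) := hcount
      _ ≤ Finset.univ.card := by simpa using div_le_self (Nat.cast_nonneg n) (by simp)
end

section
/- Let 0 < q ≤ p, let Π = {(x,y,z,w) ∈ ℝ⁴ : z = w = 0}, Σ = {(x,y,z,w) : w = 0}, and Σ' = {(x,y,z,w) : az + bw = 0} where (a,b) is a unit vector in ℝ². Let W = {v ∈ ℝ⁴ : |v| = 1, |v₃| ≤ p, |v₄| ≤ q, |a v₃ + b v₄| ≤ q}. Then for each real A with 1 ≤ A ≤ p/(4q), at least one of the following holds: (A) W ⊆ {v : |v| = 1, |v₄| ≤ q, |v₃| ≤ p/A}; or (B) both containments hold: {v : |v|=1, |v₃| ≤ p, |v₄| ≤ q} ⊆ {v : |v|=1, |v₃| ≤ p, |a v₃ + b v₄| ≤ 6Aq} and {v : |v|=1, |v₃| ≤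 p, |a v₃ + b v₄| ≤ q} ⊆ {v : |v|=1, |v₃| ≤ p, |v₄| ≤ 6Aq}. -/
open Set

/-- Lemma 4.5 (prismsAreUnique), in coordinates: with `Π = {z = w = 0}`, `Σ = {w = 0}`,
`Σ' = {az + bw = 0}` for a unit vector `(a,b)`, and
`W = {v ∈ S³ : |v₃| ≤ p, |v₄| ≤ q, |a v₃ + b v₄| ≤ q}`, for each `1 ≤ A ≤ p/(4q)` either
(A) `W ⊆ {v ∈ S³ : |v₄| ≤ q, |v₃| ≤ p/A}`, or (B) the two angular containments hold with
tolerance `6Aq`. -/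
theorem prisms_are_unique
    (p q a b A : ℝ) (hq : 0 < q) (hqp : q ≤ p)
    (hab : a ^ 2 + b ^ 2 = 1) (hA1 : 1 ≤ A) (hA2 : A ≤ p / (4 * q)) :
    ({v : EuclideanSpace ℝ (Fin 4) | ‖v‖ = 1 ∧ |v 2| ≤ p ∧ |v 3| ≤ q ∧
        |a * v 2 + b * v 3| ≤ q} ⊆
      {v : EuclideanSpace ℝ (Fin 4) | ‖v‖ = 1 ∧ |v 3| ≤ q ∧ |v 2| ≤ p / A})
    ∨
    (({v : EuclideanSpace ℝ (Fin 4) | ‖v‖ = 1 ∧ |v 2| ≤ p ∧ |v 3| ≤ q} ⊆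
        {v : EuclideanSpace ℝ (Fin 4) | ‖v‖ = 1 ∧ |v 2| ≤ p ∧
          |a * v 2 + b * v 3| ≤ 6 * A * q}) ∧
      ({v : EuclideanSpace ℝ (Fin 4) | ‖v‖ = 1 ∧ |v 2| ≤ p ∧
          |a * v 2 + b * v 3| ≤ q} ⊆
        {v : EuclideanSpace ℝ (Fin 4) | ‖v‖ = 1 ∧ |v 2| ≤ p ∧ |v 3| ≤ 6 * A * q})) := by
  have hp : 0 < p := lt_of_lt_of_le hq hqp
  have hA0 : 0 < A := lt_of_lt_of_le one_pos hA1
  have hA2' : 4 * A * q ≤ p := by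
    rw [le_div_iff₀ (by positivity)] at hA2; linarith
  have ha1 : |a| ≤ 1 := by nlinarith [sq_abs a, sq_abs b, sq_nonneg b, abs_nonneg a]
  have hb1 : |b| ≤ 1 := by nlinarith [sq_abs b, sq_abs a, sq_nonneg a, abs_nonneg b]
  by_cases h : 2 * A * q ≤ |a| * p
  · left
    rintro v ⟨hv, h2, h3, h4⟩
    refine ⟨hv, h3, ?_⟩
    have hav : |a| * |v 2| ≤ 2 * q := by
      have key : |a * v 2| ≤ 2 * q := by
        calc |a * v 2| = |(a * v 2 + b * v 3) - b * v 3| := by congr 1; ring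
          _ ≤ |a * v 2 + b * v 3| + |b * v 3| := abs_sub _ _
          _ ≤ q + |b| * |v 3| := by rw [abs_mul]; exact add_le_add h4 le_rfl
          _ ≤ q + 1 * q := add_le_add le_rfl
              (mul_le_mul hb1 h3 (abs_nonneg _) zero_le_one)
          _ = 2 * q := by ring
      rwa [abs_mul] at key
    rw [le_div_iff₀ hA0]
    nlinarith [abs_nonneg (v 2), abs_nonneg a]
  · push_neg at h
    have ha : |a| * p ≤ 2 * A * q := le_of_lt h
    have hb : 1 / 2 ≤ |b| := by
      have haq : |a| ≤ 1 / 2 := by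
        by_contra hc
        push_neg at hc
        nlinarith [abs_nonneg a]
      nlinarith [sq_abs a, sq_abs b, abs_nonneg a, abs_nonneg b]
    right
    constructor
    · rintro v ⟨hv, h2, h3⟩
      refine ⟨hv, h2, ?_⟩
      calc |a * v 2 + b * v 3| ≤ |a| * |v 2| + |b| * |v 3| := by
            rw [← abs_mul, ← abs_mul]; exact abs_add_le _ _
        _ ≤ |a| * p + 1 * q := add_le_add
            (mul_le_mul le_rfl h2 (abs_nonneg _) (abs_nonneg _))
            (mul_le_mul hb1 h3 (abs_nonneg _) zero_le_one)
        _ ≤ 6 * A * q := by nlinarith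
    · rintro v ⟨hv, h2, h4⟩
      refine ⟨hv, h2, ?_⟩
      have hbv : |b| * |v 3| ≤ 3 * A * q := by
        calc |b| * |v 3| = |b * v 3| := (abs_mul _ _).symm
          _ = |(a * v 2 + b * v 3) - a * v 2| := by congr 1; ring
          _ ≤ |a * v 2 + b * v 3| + |a * v 2| := abs_sub _ _
          _ ≤ q + |a| * p := by
              rw [abs_mul]
              exact add_le_add h4 (mul_le_mul le_rfl h2 (abs_nonneg _) (abs_nonneg _))
          _ ≤ 3 * A * q := by nlinarith
      nlinarith [abs_nonneg (v 3)]
end
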